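/- Let n ≥ 2. The map Ψ is a bijection from Sp(1)ⁿ × 𝒪 onto 𝒟. In particular: (i) for every Θ = (Θ_1, …, Θ_n) with Θ_j ∈ ℍ, |Θ_j| = 1, and every w ∈ 𝒪, the matrix Ψ(Θ, w) belongs to Sp(n) and all entries of its last row are nonzero; (ii) Ψ is injective; (iii) every U ∈ 𝒟 is of the form Ψ(Θ, w) for some such pair (Θ, w). -/

import Mathlib

/-!
The `j`-th column of `Ψ(Θ, w)` is `c_j (w_j, 1) Θ_j` with `c_j = (1 + |w_j|²)^{-1/2}`, so the
Gram matrix of the columns has entries `c_i c_j Θ̄_i (⟨w_i, w_j⟩ + 1) Θ_j`: the columns have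
length one, and the relations `⟨w_i, w_j⟩ = -1` say exactly that distinct columns are orthogonal.
The inverse is explicit: the last row of `U = Ψ(Θ, w)` is `c_j Θ_j`, so `Θ_j = U_{nj} / |U_{nj}|`,
and every other row is `w_{kj}` times the last one, so `w_{kj} = U_{kj} U_{nj}⁻¹`.
-/

open Quaternion Matrix

/-- The trivialization map `Ψ : Sp(1)ⁿ × 𝒪 → 𝒟` sending `(Θ, w)` to the matrix
with `(i,j)` entry `w_{ij} Θ_j / √(1+|w_j|²)` for `i < n-1` and last-row entry
`Θ_j / √(1+|w_j|²)`. -/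
noncomputable def PsiMap (n : ℕ)
    (p : (Fin n → ℍ[ℝ]) × (Fin (n - 1) → Fin n → ℍ[ℝ])) :
    Matrix (Fin n) (Fin n) ℍ[ℝ] :=
  Matrix.of fun i j =>
    if h : i.val < n - 1 then
      (Real.sqrt (1 + ∑ k : Fin (n - 1), ‖p.2 k j‖ ^ 2))⁻¹ • (p.2 ⟨i.val, h⟩ j * p.1 j)
    else
      (Real.sqrt (1 + ∑ k : Fin (n - 1), ‖p.2 k j‖ ^ 2))⁻¹ • p.1 j

theorem Fin.sum_univ_eq_sum_lt_add_last {M : Type*} [AddCommMonoid M] {n : ℕ} (hn : 1 ≤ n)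
    (f : Fin n → M) :
    ∑ i, f i = ∑ k : Fin (n - 1), f ⟨k, by omega⟩ + f ⟨n - 1, by omega⟩ := by
  obtain ⟨m, rfl⟩ : ∃ m, n = m + 1 := ⟨n - 1, by omega⟩
  exact Fin.sum_univ_castSucc f

theorem Matrix.ext_of_lt_of_last {α ι : Type*} {n : ℕ} (hn : 1 ≤ n) {A B : Matrix (Fin n) ι α}
    (htop : ∀ (k : Fin (n - 1)) j, A ⟨k, by omega⟩ j = B ⟨k, by omega⟩ j)
    (hlast : ∀ j, A ⟨n - 1, by omega⟩ j = B ⟨n - 1, by omega⟩ j) : A = B := by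
  ext i j
  by_cases hi : i.val < n - 1
  · exact htop ⟨i, hi⟩ j
  · rw [show i = ⟨n - 1, by omega⟩ from Fin.ext (by simp only; omega)]
    exact hlast j

theorem Matrix.conjTranspose_mul_self_apply_eq_sum_lt_add_last {α ι : Type*} [Fintype ι]
    [Star α] [Mul α] [AddCommMonoid α] {n : ℕ} (hn : 1 ≤ n) (U : Matrix (Fin n) ι α) (i j : ι) :
    (Uᴴ * U) i j = ∑ k : Fin (n - 1), star (U ⟨k, by omega⟩ i) * U ⟨k, by omega⟩ j
      + star (U ⟨n - 1, by omega⟩ i) * U ⟨n - 1, by omega⟩ j := by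
  rw [mul_apply, Fin.sum_univ_eq_sum_lt_add_last hn]
  rfl

namespace Quaternion

@[simp, norm_cast]
theorem coe_sum {R ι : Type*} [CommRing R] (s : Finset ι) (f : ι → R) :
    ((∑ i ∈ s, f i : R) : ℍ[R]) = ∑ i ∈ s, (f i : ℍ[R]) :=
  map_sum (algebraMap R ℍ[R]) f s

theorem star_mul_self_eq_coe_norm_sq (a : ℍ[ℝ]) : star a * a = ((‖a‖ ^ 2 : ℝ) : ℍ[ℝ]) := by
  rw [star_mul_self, normSq_eq_norm_mul_self, sq]

theorem star_mul_coe_mul_self (a : ℍ[ℝ]) (r : ℝ) :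
    star a * r * a = ((r * ‖a‖ ^ 2 : ℝ) : ℍ[ℝ]) := by
  rw [← (coe_commute r (star a)).eq, mul_assoc, star_mul_self_eq_coe_norm_sq, ← coe_mul]

end Quaternion

theorem Matrix.sum_norm_sq_eq_one_of_conjTranspose_mul_self {ι κ : Type*} [Fintype ι]
    [DecidableEq κ] {U : Matrix ι κ ℍ[ℝ]} (hU : Uᴴ * U = 1) (j : κ) :
    ∑ k, ‖U k j‖ ^ 2 = 1 := by
  apply Quaternion.coe_injective
  have hjj := congr_fun₂ hU j j
  rw [mul_apply, one_apply_eq] at hjj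
  simp only [conjTranspose_apply, Quaternion.star_mul_self_eq_coe_norm_sq] at hjj
  exact_mod_cast hjj

noncomputable def psiScale {m n : ℕ} (w : Fin m → Fin n → ℍ[ℝ]) (j : Fin n) : ℝ :=
  (Real.sqrt (1 + ∑ k, ‖w k j‖ ^ 2))⁻¹

theorem psiScale_pos {m n : ℕ} (w : Fin m → Fin n → ℍ[ℝ]) (j : Fin n) : 0 < psiScale w j := by
  unfold psiScale
  positivity

theorem psiScale_sq_mul {m n : ℕ} (w : Fin m → Fin n → ℍ[ℝ]) (j : Fin n) :
    psiScale w j ^ 2 * (1 + ∑ k, ‖w k j‖ ^ 2) = 1 := by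
  have : 0 < 1 + ∑ k, ‖w k j‖ ^ 2 := by positivity
  rw [psiScale, inv_pow, Real.sq_sqrt this.le, inv_mul_cancel₀ this.ne']

section PsiMap

variable {n : ℕ}

theorem PsiMap_apply_last (hn : 1 ≤ n) (p : (Fin n → ℍ[ℝ]) × (Fin (n - 1) → Fin n → ℍ[ℝ]))
    (j : Fin n) :
    PsiMap n p ⟨n - 1, by omega⟩ j = psiScale p.2 j • p.1 j := by
  simp [PsiMap, psiScale]

theorem PsiMap_apply_lt (hn : 1 ≤ n) (p : (Fin n → ℍ[ℝ]) × (Fin (n - 1) → Fin n → ℍ[ℝ]))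
    (k : Fin (n - 1)) (j : Fin n) :
    PsiMap n p ⟨k, by omega⟩ j = p.2 k j * PsiMap n p ⟨n - 1, by omega⟩ j := by
  rw [PsiMap_apply_last hn, mul_smul_comm]
  simp [PsiMap, psiScale]

theorem PsiMap_apply_last_ne_zero (hn : 1 ≤ n) {p : (Fin n → ℍ[ℝ]) × (Fin (n - 1) → Fin n → ℍ[ℝ])}
    (hΘ : ∀ j, ‖p.1 j‖ = 1) (j : Fin n) : PsiMap n p ⟨n - 1, by omega⟩ j ≠ 0 := by
  rw [PsiMap_apply_last hn]
  exact smul_ne_zero (psiScale_pos p.2 j).ne' (norm_ne_zero_iff.mp (by simp [hΘ j]))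

theorem norm_PsiMap_apply_last (hn : 1 ≤ n) {p : (Fin n → ℍ[ℝ]) × (Fin (n - 1) → Fin n → ℍ[ℝ])}
    (hΘ : ∀ j, ‖p.1 j‖ = 1) (j : Fin n) : ‖PsiMap n p ⟨n - 1, by omega⟩ j‖ = psiScale p.2 j := by
  rw [PsiMap_apply_last hn, norm_smul, hΘ j, mul_one, Real.norm_of_nonneg (psiScale_pos p.2 j).le]

theorem conjTranspose_PsiMap_mul_self_apply (hn : 1 ≤ n)
    (p : (Fin n → ℍ[ℝ]) × (Fin (n - 1) → Fin n → ℍ[ℝ])) (i j : Fin n) :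
    ((PsiMap n p)ᴴ * PsiMap n p) i j = star (PsiMap n p ⟨n - 1, by omega⟩ i) *
      (∑ k, star (p.2 k i) * p.2 k j + 1) * PsiMap n p ⟨n - 1, by omega⟩ j := by
  rw [conjTranspose_mul_self_apply_eq_sum_lt_add_last hn]
  simp only [PsiMap_apply_lt hn, star_mul, mul_add, add_mul, Finset.mul_sum, Finset.sum_mul,
    mul_one, mul_assoc]

theorem conjTranspose_PsiMap_mul_self (hn : 1 ≤ n)
    {p : (Fin n → ℍ[ℝ]) × (Fin (n - 1) → Fin n → ℍ[ℝ])} (hΘ : ∀ j, ‖p.1 j‖ = 1)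
    (hw : ∀ i j : Fin n, i < j → ∑ k, star (p.2 k i) * p.2 k j = -1) :
    (PsiMap n p)ᴴ * PsiMap n p = 1 := by
  refine Matrix.ext fun i j => ?_
  rw [conjTranspose_PsiMap_mul_self_apply hn]
  rcases lt_trichotomy i j with hij | rfl | hij
  · rw [hw i j hij, neg_add_cancel, mul_zero, zero_mul, one_apply_ne hij.ne]
  · have hsum : ∑ k, star (p.2 k i) * p.2 k i + 1 = ((1 + ∑ k, ‖p.2 k i‖ ^ 2 : ℝ) : ℍ[ℝ]) := by
      simp only [Quaternion.star_mul_self_eq_coe_norm_sq]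
      push_cast
      exact add_comm _ _
    rw [hsum, Quaternion.star_mul_coe_mul_self, norm_PsiMap_apply_last hn hΘ, mul_comm,
      psiScale_sq_mul, Quaternion.coe_one, one_apply_eq]
  · have hw' : ∑ k, star (p.2 k i) * p.2 k j = -1 := by
      simpa [star_sum] using congrArg star (hw j i hij)
    rw [hw', neg_add_cancel, mul_zero, zero_mul, one_apply_ne hij.ne']

noncomputable def psiMapInv (hn : 1 ≤ n) (U : Matrix (Fin n) (Fin n) ℍ[ℝ]) :
    (Fin n → ℍ[ℝ]) × (Fin (n - 1) → Fin n → ℍ[ℝ]) :=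
  (fun j => ‖U ⟨n - 1, by omega⟩ j‖⁻¹ • U ⟨n - 1, by omega⟩ j,
    fun k j => U ⟨k, by omega⟩ j * (U ⟨n - 1, by omega⟩ j)⁻¹)

theorem psiMapInv_PsiMap (hn : 1 ≤ n) {p : (Fin n → ℍ[ℝ]) × (Fin (n - 1) → Fin n → ℍ[ℝ])}
    (hΘ : ∀ j, ‖p.1 j‖ = 1) : psiMapInv hn (PsiMap n p) = p := by
  refine Prod.ext (funext fun j => ?_) (funext₂ fun k j => ?_)
  · simp only [psiMapInv]
    rw [norm_PsiMap_apply_last hn hΘ, PsiMap_apply_last hn,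
      inv_smul_smul₀ (psiScale_pos p.2 j).ne']
  · simp only [psiMapInv]
    rw [PsiMap_apply_lt hn, mul_inv_cancel_right₀ (PsiMap_apply_last_ne_zero hn hΘ j)]

section Inverse

variable (hn : 1 ≤ n) {U : Matrix (Fin n) (Fin n) ℍ[ℝ]}

theorem norm_psiMapInv_fst (hlast : ∀ j, U ⟨n - 1, by omega⟩ j ≠ 0) (j : Fin n) :
    ‖(psiMapInv hn U).1 j‖ = 1 :=
  norm_smul_inv_norm (hlast j)

theorem sum_star_psiMapInv_snd_mul (hU : Uᴴ * U = 1) (hlast : ∀ j, U ⟨n - 1, by omega⟩ j ≠ 0)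
    {i j : Fin n} (hij : i ≠ j) :
    ∑ k, star ((psiMapInv hn U).2 k i) * (psiMapInv hn U).2 k j = -1 := by
  have hgram := congr_fun₂ hU i j
  rw [conjTranspose_mul_self_apply_eq_sum_lt_add_last hn, one_apply_ne hij] at hgram
  calc ∑ k, star ((psiMapInv hn U).2 k i) * (psiMapInv hn U).2 k j
      = (star (U ⟨n - 1, by omega⟩ i))⁻¹ *
          (∑ k : Fin (n - 1), star (U ⟨k, by omega⟩ i) * U ⟨k, by omega⟩ j) *
          (U ⟨n - 1, by omega⟩ j)⁻¹ := by
        simp only [psiMapInv, star_mul, star_inv₀, Finset.mul_sum, Finset.sum_mul, mul_assoc]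
    _ = (star (U ⟨n - 1, by omega⟩ i))⁻¹ *
          -(star (U ⟨n - 1, by omega⟩ i) * U ⟨n - 1, by omega⟩ j) * (U ⟨n - 1, by omega⟩ j)⁻¹ := by
        rw [eq_neg_of_add_eq_zero_left hgram]
    _ = -1 := by
        rw [mul_neg, neg_mul, ← mul_assoc, inv_mul_cancel₀ (star_ne_zero.2 (hlast i)), one_mul,
          mul_inv_cancel₀ (hlast j)]

theorem psiScale_psiMapInv_snd (hU : Uᴴ * U = 1) (hlast : ∀ j, U ⟨n - 1, by omega⟩ j ≠ 0)
    (j : Fin n) : psiScale (psiMapInv hn U).2 j = ‖U ⟨n - 1, by omega⟩ j‖ := by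
  have hr : 0 < ‖U ⟨n - 1, by omega⟩ j‖ := norm_pos_iff.mpr (hlast j)
  have hcol : ∑ k : Fin (n - 1), ‖U ⟨k, by omega⟩ j‖ ^ 2 = 1 - ‖U ⟨n - 1, by omega⟩ j‖ ^ 2 := by
    have := sum_norm_sq_eq_one_of_conjTranspose_mul_self hU j
    rw [Fin.sum_univ_eq_sum_lt_add_last hn] at this
    linarith
  have hsum : 1 + ∑ k, ‖(psiMapInv hn U).2 k j‖ ^ 2 = ‖U ⟨n - 1, by omega⟩ j‖⁻¹ ^ 2 := by
    simp only [psiMapInv, norm_mul, norm_inv, mul_pow, ← Finset.sum_mul, hcol]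
    field_simp
    ring
  rw [psiScale, hsum, Real.sqrt_sq (inv_pos.2 hr).le, inv_inv]

theorem PsiMap_psiMapInv (hU : Uᴴ * U = 1) (hlast : ∀ j, U ⟨n - 1, by omega⟩ j ≠ 0) :
    PsiMap n (psiMapInv hn U) = U := by
  have hrow (j : Fin n) :
      PsiMap n (psiMapInv hn U) ⟨n - 1, by omega⟩ j = U ⟨n - 1, by omega⟩ j := by
    rw [PsiMap_apply_last hn, psiScale_psiMapInv_snd hn hU hlast]
    exact smul_inv_smul₀ (norm_ne_zero_iff.2 (hlast j)) _
  refine Matrix.ext_of_lt_of_last hn (fun k j => ?_) hrow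
  rw [PsiMap_apply_lt hn, hrow]
  exact inv_mul_cancel_right₀ (hlast j) _

end Inverse

end PsiMap

/-- `Ψ` is a bijection from `Sp(1)ⁿ × 𝒪` onto
`𝒟 = {U ∈ Sp(n) : all last row entries nonzero}`: it maps into `𝒟`,
is injective on `Sp(1)ⁿ × 𝒪`, and every `U ∈ 𝒟` is of the form `Ψ(Θ, w)`. -/
theorem PsiMap_bijOn (n : ℕ) (hn : 2 ≤ n) :
    Set.BijOn (PsiMap n)
      {p : (Fin n → ℍ[ℝ]) × (Fin (n - 1) → Fin n → ℍ[ℝ]) |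
        (∀ j, ‖p.1 j‖ = 1) ∧
        ∀ i j : Fin n, i < j → ∑ k : Fin (n - 1), star (p.2 k i) * p.2 k j = -1}
      {U : Matrix (Fin n) (Fin n) ℍ[ℝ] |
        Uᴴ * U = 1 ∧ ∀ j : Fin n, U ⟨n - 1, by omega⟩ j ≠ 0} := by
  have hn₁ : 1 ≤ n := by omega
  refine Set.InvOn.bijOn (f' := psiMapInv hn₁) ⟨?_, ?_⟩ ?_ ?_
  · rintro p ⟨hΘ, -⟩
    exact psiMapInv_PsiMap hn₁ hΘ
  · rintro U ⟨hU, hlast⟩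
    exact PsiMap_psiMapInv hn₁ hU hlast
  · rintro p ⟨hΘ, hw⟩
    exact ⟨conjTranspose_PsiMap_mul_self hn₁ hΘ hw, PsiMap_apply_last_ne_zero hn₁ hΘ⟩
  · rintro U ⟨hU, hlast⟩
    exact ⟨norm_psiMapInv_fst hn₁ hlast, fun i j hij =>
      sum_star_psiMapInv_snd_mul hn₁ hU hlast hij.ne⟩
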